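/- arXiv:2007.10635 — 2 statements merged into one kernel-verified Lean document; each statement's English description precedes it below -/
import Mathlib

section
/- Assume τ = 0. Then Θ♭(Λ) = {θ_0(Λ)} for every Λ ∈ S_{n,δ}. -/
namespace PanUnitary

/-- `part μ i` : the `i`-th largest element (0-indexed) of the multiset `μ`, `0` beyond.
Viewing a multiset of naturals as a partition (identified up to trailing zeros),
this is the `(i+1)`-st part. -/
def part (μ : Multiset ℕ) (i : ℕ) : ℕ := ((μ.sort (· ≤ ·)).reverse).getD i 0

/-- Remove the zero parts: the canonical (zero-free) representative of a partition. -/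
def strip (μ : Multiset ℕ) : Multiset ℕ := μ.filter (fun x => 0 < x)

/-- `transpose μ j` is the `(j+1)`-st part of the transposed (conjugate) partition. -/
def transpose (μ : Multiset ℕ) (j : ℕ) : ℕ := (μ.filter (fun x => j < x)).card

/-- `Preceq f g` : the partition whose parts are given by `f` is `⪯` the one given by `g`,
i.e. `g i - 1 ≤ f i ≤ g i` for all `i`. -/
def Preceq (f g : ℕ → ℕ) : Prop := ∀ i, g i ≤ f i + 1 ∧ f i ≤ g i

/-- An integer `δ` is admissible if it is even and nonnegative, or odd and negative. -/
def IsAdmissible (δ : ℤ) : Prop := (Even δ ∧ 0 ≤ δ) ∨ (Odd δ ∧ δ < 0)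

/-- `ε = 1` if `δ` is even, `ε = 0` if `δ` is odd. -/
def eps (δ : ℤ) : ℕ := if Even δ then 1 else 0

/-- `d (d + 1) / 2` where `d = |δ|`. -/
def halfTri (δ : ℤ) : ℕ := δ.natAbs * (δ.natAbs + 1) / 2

/-- A symbol: a pair of rows of natural numbers (the strict-decrease condition is
part of the predicate `Symbol.IsUnitary`). -/
structure Symbol where
  A : List ℕ
  B : List ℕ

def Symbol.defect (Λ : Symbol) : ℤ := (Λ.A.length : ℤ) - (Λ.B.length : ℤ)

/-- The row `(a_1, …, a_m)` gives the partition with parts `(a_i - e)/2 - (m - i)`. -/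
def upsRow (L : List ℕ) (e : ℕ) : Multiset ℕ :=
  ((L.mapIdx fun i a => (a - e) / 2 - (L.length - 1 - i) : List ℕ) : Multiset ℕ)

/-- The bipartition `Υ(Λ)` (canonical zero-free representatives). -/
def Symbol.Upsilon (Λ : Symbol) : Multiset ℕ × Multiset ℕ :=
  (strip (upsRow Λ.A (eps Λ.defect)), strip (upsRow Λ.B (1 - eps Λ.defect)))

/-- `Λ` is a unitary-type symbol of (admissible) defect `δ`. -/
def Symbol.IsUnitary (Λ : Symbol) (δ : ℤ) : Prop :=
  Λ.A.Pairwise (· > ·) ∧ Λ.B.Pairwise (· > ·) ∧ Λ.defect = δ ∧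
    (∀ a ∈ Λ.A, a % 2 = eps δ) ∧ (∀ b ∈ Λ.B, b % 2 = 1 - eps δ)

/-- The rank `2(|μ| + |ν|) + d(d+1)/2` of a unitary-type symbol. -/
def Symbol.rank (Λ : Symbol) : ℕ :=
  2 * (Λ.Upsilon.1.sum + Λ.Upsilon.2.sum) + halfTri Λ.defect

/-- Equivalence of symbols: same defect and same `Υ`. -/
def Symbol.Equiv (Λ Λ' : Symbol) : Prop :=
  Λ.defect = Λ'.defect ∧ Λ.Upsilon = Λ'.Upsilon

/-- Membership in `S_{n,δ}`: a unitary-type symbol of admissible defect `δ` and rank `n`. -/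
def InS (n : ℕ) (δ : ℤ) (Λ : Symbol) : Prop :=
  IsAdmissible δ ∧ Λ.IsUnitary δ ∧ Λ.rank = n

/-- `Σ min(x,y)` over all unordered pairs of (positions of) entries of the list. -/
def pairMinSum : List ℕ → ℕ
  | [] => 0
  | x :: xs => (xs.map (fun y => min x y)).sum + pairMinSum xs

/-- All entries of a symbol (both rows). -/
def Symbol.entries (Λ : Symbol) : List ℕ := Λ.A ++ Λ.B

/-- `ord(Λ) = Σ min(x,y) − Σ_{i=1}^{⌊N/2⌋} (N − 2i)²`. -/
def Symbol.ord (Λ : Symbol) : ℤ :=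
  (pairMinSum Λ.entries : ℤ) -
    ∑ i ∈ Finset.Icc 1 (Λ.entries.length / 2),
      ((Λ.entries.length : ℤ) - 2 * (i : ℤ)) ^ 2

/-- The shift of a unitary-type symbol. -/
def Symbol.shift (Λ : Symbol) : Symbol :=
  ⟨Λ.A.map (fun a => a + 2) ++ [eps Λ.defect],
   Λ.B.map (fun b => b + 2) ++ [1 - eps Λ.defect]⟩

/-- The defect `δ'` for the second member of the dual pair. -/
def deltaPrime (n n' : ℕ) (δ : ℤ) : ℤ :=
  if Even (n + n') then (if δ = 0 then 0 else -δ + 1) else -δ - 1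

/-- `τ = ((n' − d'(d'+1)/2) − (n − d(d+1)/2)) / 2`. -/
def tau (n n' : ℕ) (δ : ℤ) : ℚ :=
  (((n' : ℚ) - (halfTri (deltaPrime n n' δ) : ℚ)) - ((n : ℚ) - (halfTri δ : ℚ))) / 2

/-- `τ` as a natural number (equal to `τ` whenever `τ` is a nonnegative integer). -/
def tauNat (n n' : ℕ) (δ : ℤ) : ℕ :=
  ((n' + halfTri δ) - (n + halfTri (deltaPrime n n' δ))) / 2

/-- The set of (canonical, zero-free) bipartitions `(μ;ν)` with
`2(|μ|+|ν|) + d(d+1)/2 = n`; equivalently `|μ|+|ν| = (n − d(d+1)/2)/2`. -/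
def BipSet (n : ℕ) (δ : ℤ) : Set (Multiset ℕ × Multiset ℕ) :=
  {p | (∀ x ∈ p.1, 0 < x) ∧ (∀ x ∈ p.2, 0 < x) ∧ 2 * (p.1.sum + p.2.sum) + halfTri δ = n}

/-- The `⪯`-conditions (on transposes) defining the relation `Θ`, at the level of
bipartitions `p = Υ(Λ)`, `q = Υ(Λ')`. -/
def PrecCond (n n' : ℕ) (p q : Multiset ℕ × Multiset ℕ) : Prop :=
  if Even (n + n') then
    Preceq (transpose p.2) (transpose q.1) ∧ Preceq (transpose q.2) (transpose p.1)
  else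
    Preceq (transpose p.1) (transpose q.2) ∧ Preceq (transpose q.1) (transpose p.2)

/-- `Θ` at the level of bipartitions (classes of symbols). -/
def ThetaB (n n' : ℕ) (δ : ℤ) (p q : Multiset ℕ × Multiset ℕ) : Prop :=
  q ∈ BipSet n' (deltaPrime n n' δ) ∧ PrecCond n n' p q

/-- `Λ' ∈ Θ(Λ)` for symbols, where `Λ ∈ S_{n,δ}`. -/
def InTheta (n n' : ℕ) (δ : ℤ) (Λ Λ' : Symbol) : Prop :=
  InS n' (deltaPrime n n' δ) Λ' ∧ PrecCond n n' Λ.Upsilon Λ'.Upsilon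

/-- `Λ' ∈ Θ(Λ)_k`. -/
def InThetaK (n n' : ℕ) (δ : ℤ) (k : ℕ) (Λ Λ' : Symbol) : Prop :=
  InTheta n n' δ Λ Λ' ∧
    (if Even (n + n') then (Λ'.Upsilon.2.sum : ℤ) = (Λ.Upsilon.1.sum : ℤ) - (k : ℤ)
     else (Λ'.Upsilon.1.sum : ℤ) = (Λ.Upsilon.2.sum : ℤ) - (k : ℤ))

/-- Remove (one copy of) the largest part. -/
def mtail (μ : Multiset ℕ) : Multiset ℕ := μ.erase (part μ 0)

/-- `θ_k` at the level of bipartitions: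
even case: `(μ;ν) ↦ (sort(ν, τ+k); sort(μ_2, …, μ_{m_1}, μ_1 − k))`;
odd case: `(μ;ν) ↦ (sort(ν_2, …, ν_{m_2}, ν_1 − k); sort(μ, τ+k))`. -/
def thetaBip (n n' : ℕ) (δ : ℤ) (k : ℕ) (p : Multiset ℕ × Multiset ℕ) :
    Multiset ℕ × Multiset ℕ :=
  if Even (n + n') then
    (strip ((tauNat n n' δ + k) ::ₘ p.2), strip ((part p.1 0 - k) ::ₘ mtail p.1))
  else
    (strip ((part p.2 0 - k) ::ₘ mtail p.2), strip ((tauNat n n' δ + k) ::ₘ p.1))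

/-- The unitary-type symbol of defect `δ` with `Υ = p`, whose first row has `m1`
entries and second row `m2` entries (valid whenever `m1, m2` are large enough). -/
def symbolOfBip (δ : ℤ) (p : Multiset ℕ × Multiset ℕ) (m1 m2 : ℕ) : Symbol :=
  ⟨List.ofFn (fun i : Fin m1 => 2 * (part p.1 (i : ℕ) + (m1 - 1 - (i : ℕ))) + eps δ),
   List.ofFn (fun j : Fin m2 => 2 * (part p.2 (j : ℕ) + (m2 - 1 - (j : ℕ))) + (1 - eps δ))⟩

/-- A canonical representative symbol of defect `δ` with `Υ = p`. -/
def canonicalSymbol (δ : ℤ) (p : Multiset ℕ × Multiset ℕ) : Symbol :=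
  symbolOfBip δ p (max p.1.card ((p.2.card : ℤ) + δ).toNat)
    (((max p.1.card ((p.2.card : ℤ) + δ).toNat : ℤ) - δ).toNat)

/-- A symbol representing the class `θ_k(Λ)`. -/
def thetaSymbol (n n' : ℕ) (δ : ℤ) (k : ℕ) (Λ : Symbol) : Symbol :=
  canonicalSymbol (deltaPrime n n' δ) (thetaBip n n' δ k Λ.Upsilon)

/-- `K(Λ)`: `μ_1` in the even case, `ν_1` in the odd case. -/
def bigK (n n' : ℕ) (Λ : Symbol) : ℕ :=
  if Even (n + n') then part Λ.Upsilon.1 0 else part Λ.Upsilon.2 0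

/-- `ord` at the level of bipartitions (well defined on classes). -/
def ordB (δ : ℤ) (p : Multiset ℕ × Multiset ℕ) : ℤ := (canonicalSymbol δ p).ord

/-- Strict lexicographic order on partitions. -/
def PartLexLt (μ ν : Multiset ℕ) : Prop :=
  ∃ i, (∀ j < i, part μ j = part ν j) ∧ part μ i < part ν i

/-- The total order on `S_{n,δ}` (and on `S_{n',δ'}`), at the level of bipartitions;
it depends only on the parity of `n + n'`. -/
def BLt (n n' : ℕ) (p q : Multiset ℕ × Multiset ℕ) : Prop :=
  if Even (n + n') then
    p.1.sum < q.1.sum ∨ (p.1.sum = q.1.sum ∧ PartLexLt p.1 q.1) ∨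
      (p.1 = q.1 ∧ PartLexLt p.2 q.2)
  else
    p.2.sum < q.2.sum ∨ (p.2.sum = q.2.sum ∧ PartLexLt p.2 q.2) ∨
      (p.2 = q.2 ∧ PartLexLt p.1 q.1)

/-- `q ∈ Θ♭(p)` relative to a given partial function `bar` (playing the role of `θ̄`). -/
def InFlat (n n' : ℕ) (δ : ℤ)
    (bar : Multiset ℕ × Multiset ℕ → Option (Multiset ℕ × Multiset ℕ))
    (p q : Multiset ℕ × Multiset ℕ) : Prop :=
  ThetaB n n' δ p q ∧ ∀ r ∈ BipSet n δ, BLt n n' r p → bar r ≠ some q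

/-- `bar` is the partial function `θ̄` defined by recursion along the total order:
on each `p ∈ S_{n,δ}`, if `Θ♭(p) ≠ ∅` then `bar p` is defined and is the smallest
element (w.r.t. the total order) of maximal `ord` in `Θ♭(p)`. -/
def IsThetaBar (n n' : ℕ) (δ : ℤ)
    (bar : Multiset ℕ × Multiset ℕ → Option (Multiset ℕ × Multiset ℕ)) : Prop :=
  (∀ p, p ∉ BipSet n δ → bar p = none) ∧
  ∀ p ∈ BipSet n δ,
    ((∃ q, InFlat n n' δ bar p q) → ∃ q, bar p = some q) ∧
    ∀ q, bar p = some q →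
      InFlat n n' δ bar p q ∧
      (∀ r, InFlat n n' δ bar p r →
        ordB (deltaPrime n n' δ) r ≤ ordB (deltaPrime n n' δ) q) ∧
      (∀ r, InFlat n n' δ bar p r →
        ordB (deltaPrime n n' δ) r = ordB (deltaPrime n n' δ) q → r ≠ q → BLt n n' q r)

/-! With `τ = 0` the ranks force `|μ'| + |ν'| = |μ| + |ν|`, while the `⪯`-conditions give
`|ν'| ≤ |μ|` and `|ν| ≤ |μ'|` (even case). Either both are equalities, and then, since
transposes that are pointwise comparable with equal sums coincide, `Λ' = θ_0(Λ)` is the swap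
`(ν;μ)`; or both are strict, and then `(ν';μ')` precedes `Λ` and has `Λ'` as its only
candidate, so `θ̄` has already used `Λ'`. Strong induction along the total order makes this
rigorous; the odd case is the same argument with the roles of `μ` and `ν` exchanged. -/

section Transpose

lemma transpose_cons (x : ℕ) (μ : Multiset ℕ) (j : ℕ) :
    transpose (x ::ₘ μ) j = (if j < x then 1 else 0) + transpose μ j := by
  simp only [transpose, Multiset.filter_cons]
  split <;> simp [Nat.add_comm]

lemma transpose_eq_transpose_succ_add_count (μ : Multiset ℕ) (m : ℕ) :
    transpose μ m = transpose μ (m + 1) + μ.count (m + 1) := by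
  induction μ using Multiset.induction with
  | empty => simp [transpose]
  | cons x s ih =>
    rw [transpose_cons, transpose_cons, Multiset.count_cons]
    split_ifs <;> omega

lemma transpose_eq_zero {μ : Multiset ℕ} {j : ℕ} (h : ∀ x ∈ μ, x ≤ j) : transpose μ j = 0 := by
  rw [transpose, Multiset.card_eq_zero, Multiset.filter_eq_nil]
  exact fun x hx => (h x hx).not_gt

lemma sum_range_transpose {μ : Multiset ℕ} {B : ℕ} (h : ∀ x ∈ μ, x ≤ B) :
    ∑ j ∈ Finset.range B, transpose μ j = μ.sum := by
  induction μ using Multiset.induction with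
  | empty => simp [transpose]
  | cons x s ih =>
    rw [Multiset.forall_mem_cons] at h
    have hfilter : (Finset.range B).filter (· < x) = Finset.range x := by
      ext j
      simp only [Finset.mem_filter, Finset.mem_range]
      omega
    simp only [transpose_cons, Finset.sum_add_distrib, ih h.2, Multiset.sum_cons,
      Finset.sum_boole, hfilter, Finset.card_range, Nat.cast_id]

lemma sum_le_sum_of_transpose_le {μ ν : Multiset ℕ} (h : ∀ j, transpose μ j ≤ transpose ν j) :
    μ.sum ≤ ν.sum := by
  set B := μ.sum + ν.sum
  have hμ (x) (hx : x ∈ μ) : x ≤ B := le_add_right (Multiset.le_sum_of_mem hx)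
  have hν (x) (hx : x ∈ ν) : x ≤ B := le_add_left (Multiset.le_sum_of_mem hx)
  calc μ.sum = ∑ j ∈ Finset.range B, transpose μ j := (sum_range_transpose hμ).symm
    _ ≤ ∑ j ∈ Finset.range B, transpose ν j := Finset.sum_le_sum fun j _ => h j
    _ = ν.sum := sum_range_transpose hν

lemma transpose_eq_of_le_of_sum_eq {μ ν : Multiset ℕ} (hle : ∀ j, transpose μ j ≤ transpose ν j)
    (hsum : μ.sum = ν.sum) (j : ℕ) : transpose μ j = transpose ν j := by
  set B := μ.sum + ν.sum
  have hμ (x) (hx : x ∈ μ) : x ≤ B := le_add_right (Multiset.le_sum_of_mem hx)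
  have hν (x) (hx : x ∈ ν) : x ≤ B := le_add_left (Multiset.le_sum_of_mem hx)
  by_cases hj : j < B
  · have hsums : ∑ j ∈ Finset.range B, transpose μ j = ∑ j ∈ Finset.range B, transpose ν j := by
      rw [sum_range_transpose hμ, sum_range_transpose hν, hsum]
    exact (Finset.sum_eq_sum_iff_of_le fun i _ => hle i).mp hsums j (Finset.mem_range.mpr hj)
  · rw [transpose_eq_zero fun x hx => (hμ x hx).trans (not_lt.mp hj),
      transpose_eq_zero fun x hx => (hν x hx).trans (not_lt.mp hj)]

lemma eq_of_transpose_eq {μ ν : Multiset ℕ} (hμ : ∀ x ∈ μ, 0 < x) (hν : ∀ x ∈ ν, 0 < x)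
    (h : ∀ j, transpose μ j = transpose ν j) : μ = ν := by
  ext m
  cases m with
  | zero =>
    rw [Multiset.count_eq_zero.mpr fun h0 => (hμ 0 h0).false,
      Multiset.count_eq_zero.mpr fun h0 => (hν 0 h0).false]
  | succ m =>
    have hμm := transpose_eq_transpose_succ_add_count μ m
    have hνm := transpose_eq_transpose_succ_add_count ν m
    rw [h m, h (m + 1)] at hμm
    omega

lemma eq_of_transpose_le_of_sum_eq {μ ν : Multiset ℕ} (hμ : ∀ x ∈ μ, 0 < x)
    (hν : ∀ x ∈ ν, 0 < x) (hle : ∀ j, transpose μ j ≤ transpose ν j) (hsum : μ.sum = ν.sum) :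
    μ = ν :=
  eq_of_transpose_eq hμ hν (transpose_eq_of_le_of_sum_eq hle hsum)

end Transpose

lemma preceq_refl (f : ℕ → ℕ) : Preceq f f := fun _ => ⟨Nat.le_succ _, le_rfl⟩

lemma partLexLt_irrefl (μ : Multiset ℕ) : ¬ PartLexLt μ μ := fun ⟨_, _, h⟩ => h.false

lemma part_zero_mem {μ : Multiset ℕ} (h : μ ≠ 0) : part μ 0 ∈ μ := by
  obtain ⟨a, l, hl⟩ : ∃ a l, (μ.sort (· ≤ ·)).reverse = a :: l := by
    refine List.exists_cons_of_ne_nil fun hnil => h ?_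
    rw [List.reverse_eq_nil_iff] at hnil
    rw [← Multiset.sort_eq μ (· ≤ ·), hnil, Multiset.coe_nil]
  have ha : a ∈ (μ.sort (· ≤ ·)).reverse := hl ▸ List.mem_cons_self
  rw [List.mem_reverse, Multiset.mem_sort] at ha
  simpa [part, hl] using ha

lemma strip_eq_self {μ : Multiset ℕ} (h : ∀ x ∈ μ, 0 < x) : strip μ = μ :=
  Multiset.filter_eq_self.mpr h

lemma strip_zero_cons {μ : Multiset ℕ} (h : ∀ x ∈ μ, 0 < x) : strip (0 ::ₘ μ) = μ := by
  rw [strip, Multiset.filter_cons_of_neg _ (lt_irrefl 0)]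
  exact strip_eq_self h

lemma strip_part_zero_cons_mtail {μ : Multiset ℕ} (h : ∀ x ∈ μ, 0 < x) :
    strip (part μ 0 ::ₘ mtail μ) = μ := by
  rcases eq_or_ne μ 0 with rfl | hμ
  · simp [part, mtail, strip, Multiset.filter_singleton]
  · rw [mtail, Multiset.cons_erase (part_zero_mem hμ)]
    exact strip_eq_self h

lemma tau_eq_zero_iff {n n' : ℕ} {δ : ℤ} :
    tau n n' δ = 0 ↔ n' + halfTri δ = n + halfTri (deltaPrime n n' δ) := by
  rw [tau, div_eq_zero_iff, sub_eq_zero, sub_eq_sub_iff_add_eq_add]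
  norm_cast
  simp

lemma thetaBip_zero_eq_swap {n n' : ℕ} {δ : ℤ} {p : Multiset ℕ × Multiset ℕ}
    (hτ : tauNat n n' δ = 0) (hp : p ∈ BipSet n δ) : thetaBip n n' δ 0 p = p.swap := by
  obtain ⟨hp₁, hp₂, -⟩ := hp
  unfold thetaBip
  split_ifs
  · rw [hτ, Nat.sub_zero, strip_zero_cons hp₂, strip_part_zero_cons_mtail hp₁]; rfl
  · rw [hτ, Nat.sub_zero, strip_zero_cons hp₁, strip_part_zero_cons_mtail hp₂]; rfl

lemma sum_add_sum_eq_of_mem_bipSet {m m' : ℕ} {γ γ' : ℤ} (h : m' + halfTri γ = m + halfTri γ')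
    {p q : Multiset ℕ × Multiset ℕ} (hp : p ∈ BipSet m γ) (hq : q ∈ BipSet m' γ') :
    q.1.sum + q.2.sum = p.1.sum + p.2.sum := by
  have := hp.2.2
  have := hq.2.2
  omega

lemma swap_mem_bipSet {m m' : ℕ} {γ γ' : ℤ} (h : m' + halfTri γ = m + halfTri γ')
    {p : Multiset ℕ × Multiset ℕ} (hp : p ∈ BipSet m γ) : p.swap ∈ BipSet m' γ' := by
  obtain ⟨hp₁, hp₂, hpn⟩ := hp
  refine ⟨hp₂, hp₁, ?_⟩
  simp only [Prod.fst_swap, Prod.snd_swap]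
  omega

section LeadTrail

variable {n n' : ℕ}

/-- The row that the total order `BLt n n'` compares first: `μ` if `n + n'` is even, `ν` if
it is odd. -/
def lead (n n' : ℕ) (p : Multiset ℕ × Multiset ℕ) : Multiset ℕ :=
  if Even (n + n') then p.1 else p.2

def trail (n n' : ℕ) (p : Multiset ℕ × Multiset ℕ) : Multiset ℕ :=
  if Even (n + n') then p.2 else p.1

@[simp] lemma lead_swap (p : Multiset ℕ × Multiset ℕ) : lead n n' p.swap = trail n n' p := by
  unfold lead trail; split_ifs <;> rfl

@[simp] lemma trail_swap (p : Multiset ℕ × Multiset ℕ) : trail n n' p.swap = lead n n' p := by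
  unfold lead trail; split_ifs <;> rfl

lemma sum_lead_add_sum_trail (p : Multiset ℕ × Multiset ℕ) :
    (lead n n' p).sum + (trail n n' p).sum = p.1.sum + p.2.sum := by
  unfold lead trail; split_ifs <;> omega

lemma pos_of_mem_lead {m : ℕ} {γ : ℤ} {p : Multiset ℕ × Multiset ℕ} (hp : p ∈ BipSet m γ) :
    ∀ x ∈ lead n n' p, 0 < x := by
  unfold lead; split_ifs; exacts [hp.1, hp.2.1]

lemma pos_of_mem_trail {m : ℕ} {γ : ℤ} {p : Multiset ℕ × Multiset ℕ} (hp : p ∈ BipSet m γ) :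
    ∀ x ∈ trail n n' p, 0 < x := by
  unfold trail; split_ifs; exacts [hp.2.1, hp.1]

lemma PrecCond.transpose_le {p q : Multiset ℕ × Multiset ℕ} (h : PrecCond n n' p q) (j : ℕ) :
    transpose (trail n n' p) j ≤ transpose (lead n n' q) j ∧
      transpose (trail n n' q) j ≤ transpose (lead n n' p) j := by
  unfold PrecCond at h
  unfold lead trail
  split_ifs at h ⊢
  exacts [⟨(h.1 j).2, (h.2 j).2⟩, ⟨(h.1 j).2, (h.2 j).2⟩]

lemma precCond_swap (p : Multiset ℕ × Multiset ℕ) : PrecCond n n' p p.swap := by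
  unfold PrecCond; split_ifs <;> exact ⟨preceq_refl _, preceq_refl _⟩

lemma bLt_iff {r p : Multiset ℕ × Multiset ℕ} :
    BLt n n' r p ↔ (lead n n' r).sum < (lead n n' p).sum ∨
      ((lead n n' r).sum = (lead n n' p).sum ∧ PartLexLt (lead n n' r) (lead n n' p)) ∨
      (lead n n' r = lead n n' p ∧ PartLexLt (trail n n' r) (trail n n' p)) := by
  unfold BLt lead trail; split_ifs <;> rfl

end LeadTrail

section Flat

variable {n n' : ℕ} {δ : ℤ}

lemma IsThetaBar.eq_some_of_inFlat_iff
    {bar : Multiset ℕ × Multiset ℕ → Option (Multiset ℕ × Multiset ℕ)}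
    (hbar : IsThetaBar n n' δ bar) {r s : Multiset ℕ × Multiset ℕ} (hr : r ∈ BipSet n δ)
    (h : ∀ q, InFlat n n' δ bar r q ↔ q = s) : bar r = some s := by
  obtain ⟨q, hq⟩ := (hbar.2 r hr).1 ⟨s, (h s).2 rfl⟩
  obtain rfl := (h q).1 ((hbar.2 r hr).2 q hq).1
  exact hq

lemma PrecCond.sum_trail_le {p q : Multiset ℕ × Multiset ℕ} (h : PrecCond n n' p q) :
    (trail n n' q).sum ≤ (lead n n' p).sum :=
  sum_le_sum_of_transpose_le fun j => (h.transpose_le j).2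

lemma ThetaB.eq_swap_of_sum_trail_eq (hsum : n' + halfTri δ = n + halfTri (deltaPrime n n' δ))
    {p q : Multiset ℕ × Multiset ℕ} (hp : p ∈ BipSet n δ) (hq : ThetaB n n' δ p q)
    (heq : (trail n n' q).sum = (lead n n' p).sum) : q = p.swap := by
  obtain ⟨hqS, hpq⟩ := hq
  have htot := sum_add_sum_eq_of_mem_bipSet hsum hp hqS
  have htrail : trail n n' q = lead n n' p :=
    eq_of_transpose_le_of_sum_eq (pos_of_mem_trail hqS) (pos_of_mem_lead hp)
      (fun j => (hpq.transpose_le j).2) heq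
  have hlead : trail n n' p = lead n n' q := by
    refine eq_of_transpose_le_of_sum_eq (pos_of_mem_trail hp) (pos_of_mem_lead hqS)
      (fun j => (hpq.transpose_le j).1) ?_
    rw [← sum_lead_add_sum_trail (n := n) (n' := n') q,
      ← sum_lead_add_sum_trail (n := n) (n' := n') p] at htot
    omega
  unfold lead trail at htrail hlead
  split_ifs at htrail hlead
  exacts [Prod.ext hlead.symm htrail, Prod.ext htrail hlead.symm]

lemma not_bLt_of_thetaB_swap {r p : Multiset ℕ × Multiset ℕ} (hr : r ∈ BipSet n δ)
    (hp : p ∈ BipSet n δ) (hrp : ThetaB n n' δ r p.swap) : ¬ BLt n n' r p := by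
  have hle (j) := hrp.2.transpose_le j
  simp only [lead_swap, trail_swap] at hle
  have hlead : (lead n n' p).sum ≤ (lead n n' r).sum :=
    sum_le_sum_of_transpose_le fun j => (hle j).2
  have htot : (lead n n' r).sum + (trail n n' r).sum = (lead n n' p).sum + (trail n n' p).sum := by
    rw [sum_lead_add_sum_trail, sum_lead_add_sum_trail]
    exact sum_add_sum_eq_of_mem_bipSet rfl hp hr
  rw [bLt_iff]
  rintro (hlt | ⟨hs, hlex⟩ | ⟨he, hlex⟩)
  · omega
  · rw [eq_of_transpose_le_of_sum_eq (pos_of_mem_lead hp) (pos_of_mem_lead hr)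
      (fun j => (hle j).2) hs.symm] at hlex
    exact partLexLt_irrefl _ hlex
  · rw [eq_of_transpose_le_of_sum_eq (pos_of_mem_trail hr) (pos_of_mem_trail hp)
      (fun j => (hle j).1) (by rw [he] at htot; omega)] at hlex
    exact partLexLt_irrefl _ hlex

variable {bar : Multiset ℕ × Multiset ℕ → Option (Multiset ℕ × Multiset ℕ)}

lemma inFlat_swap (hsum : n' + halfTri δ = n + halfTri (deltaPrime n n' δ))
    (hbar : IsThetaBar n n' δ bar) {p : Multiset ℕ × Multiset ℕ} (hp : p ∈ BipSet n δ) :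
    InFlat n n' δ bar p p.swap :=
  ⟨⟨swap_mem_bipSet hsum hp, precCond_swap p⟩, fun r hr hlt hbarr =>
    not_bLt_of_thetaB_swap hr hp (((hbar.2 r hr).2 _ hbarr).1.1) hlt⟩

lemma inFlat_iff_eq_swap (hsum : n' + halfTri δ = n + halfTri (deltaPrime n n' δ))
    (hbar : IsThetaBar n n' δ bar) {p : Multiset ℕ × Multiset ℕ} (hp : p ∈ BipSet n δ)
    (q : Multiset ℕ × Multiset ℕ) : InFlat n n' δ bar p q ↔ q = p.swap := by
  induction hN : (lead n n' p).sum using Nat.strong_induction_on generalizing p q with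
  | _ N ih =>
  refine ⟨fun hq => ?_, fun hq => hq ▸ inFlat_swap hsum hbar hp⟩
  rcases (hq.1.2.sum_trail_le).lt_or_eq with hlt | heq
  · have hr : q.swap ∈ BipSet n δ := swap_mem_bipSet hsum.symm hq.1.1
    have hlt' : (lead n n' q.swap).sum < N := by rw [lead_swap, ← hN]; exact hlt
    have hrq (q') : InFlat n n' δ bar q.swap q' ↔ q' = q := by
      simpa using ih _ hlt' hr q' rfl
    exact absurd (hbar.eq_some_of_inFlat_iff hr hrq)
      (hq.2 _ hr (bLt_iff.mpr (Or.inl (by rwa [lead_swap]))))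
  · exact hq.1.eq_swap_of_sum_trail_eq hsum hp heq

end Flat

theorem statement13_general (n n' : ℕ) (δ : ℤ) (hτ : tau n n' δ = 0) :
    ∀ bar : Multiset ℕ × Multiset ℕ → Option (Multiset ℕ × Multiset ℕ),
      IsThetaBar n n' δ bar → ∀ p ∈ BipSet n δ,
        ∀ q, InFlat n n' δ bar p q ↔ q = thetaBip n n' δ 0 p := by
  intro bar hbar p hp q
  have hsum := tau_eq_zero_iff.mp hτ
  have htauNat : tauNat n n' δ = 0 := by unfold tauNat; omega
  rw [thetaBip_zero_eq_swap htauNat hp]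
  exact inFlat_iff_eq_swap hsum hbar hp q

/-- If `τ = 0` then `Θ♭(Λ) = {θ_0(Λ)}` for every `Λ ∈ S_{n,δ}`. -/
theorem statement13 (n n' : ℕ) (δ : ℤ) (hδ : IsAdmissible δ) (hτ : tau n n' δ = 0) :
    ∀ bar : Multiset ℕ × Multiset ℕ → Option (Multiset ℕ × Multiset ℕ),
      IsThetaBar n n' δ bar → ∀ p ∈ BipSet n δ,
        ∀ q, InFlat n n' δ bar p q ↔ q = thetaBip n n' δ 0 p :=
  statement13_general n n' δ hτ

end PanUnitary
end

section
/- Assume n ≤ ⌊n'/2⌋. Then for every Λ ∈ S_{n,δ} with Υ(Λ) = (μ;ν): if n + n' is even then τ ≥ ν_1, and if n + n' is odd then τ ≥ μ_1; in particular τ ≥ 0 whenever S_{n,δ} is nonempty. -/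
namespace PanUnitary

/-!
Since `2(|μ| + |ν|) = n − d(d+1)/2` and `μ₁, ν₁ ≤ |μ| + |ν|`, it suffices that
`n − d(d+1)/2 ≤ 2τ`, i.e. `2n + d'(d'+1)/2 ≤ n' + d(d+1)`. As `d' = d ± 1` (or `d = d' = 0`),
this follows from `2n ≤ n'` except when `d(d+1)/2` grows from `0` to `1` or from `1` to `3`;
there `n` and `n + n'` have opposite parities, so `n'` is odd and `2n < n'`.
-/

lemma two_mul_halfTri (δ : ℤ) : 2 * halfTri δ = δ.natAbs * (δ.natAbs + 1) := by
  obtain ⟨k, hk⟩ := Nat.even_mul_succ_self δ.natAbs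
  unfold halfTri
  omega

lemma halfTri_eq_add_of_natAbs_eq_succ {δ δ' : ℤ} (h : δ'.natAbs = δ.natAbs + 1) :
    halfTri δ' = halfTri δ + δ'.natAbs := by
  have hT := two_mul_halfTri δ
  have hT' := two_mul_halfTri δ'
  rw [h] at hT' ⊢
  nlinarith

lemma natAbs_lt_halfTri {δ : ℤ} (h : 2 ≤ δ.natAbs) : δ.natAbs < halfTri δ := by
  have := two_mul_halfTri δ
  nlinarith

lemma two_mul_add_halfTri_deltaPrime_le {n n' s : ℕ} {δ : ℤ} (hδ : IsAdmissible δ)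
    (h2 : 2 * n ≤ n') (hs : 2 * s + halfTri δ = n) :
    2 * n + halfTri (deltaPrime n n' δ) ≤ n' + 2 * halfTri δ := by
  have hT₀ : halfTri 0 = 0 := by decide
  have hT₁ : halfTri (-1) = 1 := by decide
  unfold deltaPrime
  rw [IsAdmissible, Int.even_iff, Int.odd_iff] at hδ
  split_ifs with hp h0
  · subst h0
    omega
  · rcases hδ with ⟨_, _⟩ | ⟨_, _⟩
    · have := halfTri_eq_add_of_natAbs_eq_succ (δ := -δ + 1) (δ' := δ) (by omega)
      omega
    · have := halfTri_eq_add_of_natAbs_eq_succ (δ := δ) (δ' := -δ + 1) (by omega)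
      rcases (by omega : δ = -1 ∨ 2 ≤ δ.natAbs) with rfl | hd
      · rw [Nat.even_iff] at hp
        omega
      · have := natAbs_lt_halfTri hd
        omega
  · rcases hδ with ⟨_, _⟩ | ⟨_, _⟩
    · have := halfTri_eq_add_of_natAbs_eq_succ (δ := δ) (δ' := -δ - 1) (by omega)
      rcases (by omega : δ = 0 ∨ 2 ≤ δ.natAbs) with rfl | hd
      · rw [Nat.even_iff] at hp
        rw [neg_zero, zero_sub, hT₁]
        omega
      · have := natAbs_lt_halfTri hd
        omega
    · have := halfTri_eq_add_of_natAbs_eq_succ (δ := -δ - 1) (δ' := δ) (by omega)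
      omega

lemma natCast_le_tau {n n' s : ℕ} {δ : ℤ} (hδ : IsAdmissible δ) (h2 : 2 * n ≤ n')
    (hs : 2 * s + halfTri δ = n) : (s : ℚ) ≤ tau n n' δ := by
  have key : ((2 * n + halfTri (deltaPrime n n' δ) : ℕ) : ℚ) ≤ ((n' + 2 * halfTri δ : ℕ) : ℚ) :=
    Nat.cast_le.mpr (two_mul_add_halfTri_deltaPrime_le hδ h2 hs)
  have hs' : ((2 * s + halfTri δ : ℕ) : ℚ) = n := by exact_mod_cast hs
  unfold tau
  push_cast at key hs'
  linarith

lemma part_le_sum (μ : Multiset ℕ) (i : ℕ) : part μ i ≤ μ.sum := by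
  unfold part
  rw [List.getD_eq_getElem?_getD]
  cases h : (μ.sort (· ≤ ·)).reverse[i]? with
  | none => exact Nat.zero_le _
  | some a =>
    exact Multiset.le_sum_of_mem
      ((Multiset.mem_sort _).mp (List.mem_reverse.mp (List.mem_of_getElem? h)))

theorem statement14_general (n n' : ℕ) (δ : ℤ) (h : n ≤ n' / 2) :
    (∀ Λ : Symbol, InS n δ Λ →
      (Even (n + n') → ((part Λ.Upsilon.2 0 : ℚ) ≤ tau n n' δ)) ∧
      (¬ Even (n + n') → ((part Λ.Upsilon.1 0 : ℚ) ≤ tau n n' δ))) ∧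
    ((∃ Λ : Symbol, InS n δ Λ) → 0 ≤ tau n n' δ) := by
  have hsum (Λ : Symbol) : InS n δ Λ →
      ((Λ.Upsilon.1.sum + Λ.Upsilon.2.sum : ℕ) : ℚ) ≤ tau n n' δ :=
    fun ⟨hδ, ⟨_, _, hdefect, _⟩, hrank⟩ => natCast_le_tau hδ (by omega) (hdefect ▸ hrank)
  refine ⟨fun Λ hΛ => ⟨fun _ => ?_, fun _ => ?_⟩,
    fun ⟨Λ, hΛ⟩ => (Nat.cast_nonneg _).trans (hsum Λ hΛ)⟩
  · exact le_trans (by exact_mod_cast (part_le_sum _ 0).trans (Nat.le_add_left _ _)) (hsum Λ hΛ)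
  · exact le_trans (by exact_mod_cast (part_le_sum _ 0).trans (Nat.le_add_right _ _)) (hsum Λ hΛ)

/-- In the stable range `n ≤ ⌊n'/2⌋` : `τ ≥ ν₁` in the even case and `τ ≥ μ₁` in the
odd case, for every `Λ ∈ S_{n,δ}`; in particular `τ ≥ 0` whenever `S_{n,δ} ≠ ∅`. -/
theorem statement14 (n n' : ℕ) (δ : ℤ) (hδ : IsAdmissible δ) (h : n ≤ n' / 2) :
    (∀ Λ : Symbol, InS n δ Λ →
      (Even (n + n') → ((part Λ.Upsilon.2 0 : ℚ) ≤ tau n n' δ)) ∧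
      (¬ Even (n + n') → ((part Λ.Upsilon.1 0 : ℚ) ≤ tau n n' δ))) ∧
    ((∃ Λ : Symbol, InS n δ Λ) → 0 ≤ tau n n' δ) :=
  statement14_general n n' δ h

end PanUnitary
end
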